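/- arXiv:2505.02360 — 4 statements merged into one kernel-verified Lean document; each statement's English description precedes it below -/
import Mathlib

section
/- Let ℓ : ℝ^d → ℝ be differentiable with ∇ℓ(x₀) ≠ 0 and suppose the gradient map is L-Lipschitz: ‖∇ℓ(x) − ∇ℓ(y)‖₂ ≤ L‖x − y‖₂ for all x, y. Let ε > 0 and define F(δ) = ε · ∇ℓ(x₀ + δ)/‖∇ℓ(x₀ + δ)‖₂ wherever ∇ℓ(x₀ + δ) ≠ 0. Then for every δ with ∇ℓ(x₀ + δ) ≠ 0, ‖F(δ) − F(0)‖₂ ≤ (2 ε L / ‖∇ℓ(x₀)‖₂) · ‖δ‖₂. -/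
/-!
The map `F` is `ε` times the normalization `g ↦ g / ‖g‖` composed with `δ ↦ ∇ℓ(x₀ + δ)`.
Normalization is `2 / ‖y‖`-Lipschitz at a nonzero `y`: from
`‖y‖ • (x/‖x‖ - y/‖y‖) = (x - y) + (‖y‖ - ‖x‖) • x/‖x‖`
and `|‖y‖ - ‖x‖| ≤ ‖x - y‖`. Composing with the `L`-Lipschitz gradient gives the bound.
-/

namespace NormedSpace

variable {V : Type*} [NormedAddCommGroup V] [NormedSpace ℝ V]

theorem norm_normalize_le_one (x : V) : ‖normalize x‖ ≤ 1 := by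
  by_cases hx : x = 0
  · simp [hx]
  · exact (norm_normalize hx).le

theorem norm_mul_norm_normalize_sub_normalize_le (x y : V) :
    ‖y‖ * ‖normalize x - normalize y‖ ≤ 2 * ‖x - y‖ := by
  have hdecomp : ‖y‖ • (normalize x - normalize y) = (x - y) + (‖y‖ - ‖x‖) • normalize x := by
    rw [smul_sub, norm_smul_normalize, sub_smul, norm_smul_normalize]
    abel
  have hnorms : |‖y‖ - ‖x‖| ≤ ‖x - y‖ := by
    rw [norm_sub_rev]
    exact abs_norm_sub_norm_le y x
  calc ‖y‖ * ‖normalize x - normalize y‖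
      = ‖(x - y) + (‖y‖ - ‖x‖) • normalize x‖ := by
        rw [← hdecomp, norm_smul, norm_norm]
    _ ≤ ‖x - y‖ + |‖y‖ - ‖x‖| * ‖normalize x‖ := by
        grw [norm_add_le, norm_smul, Real.norm_eq_abs]
    _ ≤ ‖x - y‖ + ‖x - y‖ * 1 := by
        gcongr
        exact norm_normalize_le_one x
    _ = 2 * ‖x - y‖ := by ring

theorem norm_normalize_sub_normalize_le {x y : V} (hy : y ≠ 0) :
    ‖normalize x - normalize y‖ ≤ 2 * ‖x - y‖ / ‖y‖ := by
  rw [le_div_iff₀ (norm_pos_iff.mpr hy), mul_comm]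
  exact norm_mul_norm_normalize_sub_normalize_le x y

end NormedSpace

theorem l2_fixed_point_map_lipschitz_general {d : ℕ}
    (ℓ : EuclideanSpace ℝ (Fin d) → ℝ)
    (L : ℝ)
    (hLip : ∀ x y : EuclideanSpace ℝ (Fin d),
      ‖gradient ℓ x - gradient ℓ y‖ ≤ L * ‖x - y‖)
    (x₀ : EuclideanSpace ℝ (Fin d)) (hg0 : gradient ℓ x₀ ≠ 0)
    (ε : ℝ) (hε : 0 < ε)
    (F : EuclideanSpace ℝ (Fin d) → EuclideanSpace ℝ (Fin d))
    (hF : ∀ δ, F δ = (ε / ‖gradient ℓ (x₀ + δ)‖) • gradient ℓ (x₀ + δ)) :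
    ∀ δ : EuclideanSpace ℝ (Fin d), gradient ℓ (x₀ + δ) ≠ 0 →
      ‖F δ - F 0‖ ≤ (2 * ε * L / ‖gradient ℓ x₀‖) * ‖δ‖ := by
  intro δ _
  have hF_normalize : ∀ δ, F δ = ε • NormedSpace.normalize (gradient ℓ (x₀ + δ)) := fun δ => by
    rw [hF, NormedSpace.normalize, smul_smul, div_eq_mul_inv]
  calc ‖F δ - F 0‖
      = ε * ‖NormedSpace.normalize (gradient ℓ (x₀ + δ)) -
          NormedSpace.normalize (gradient ℓ x₀)‖ := by
        rw [hF_normalize, hF_normalize, add_zero, ← smul_sub, norm_smul,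
          Real.norm_of_nonneg hε.le]
    _ ≤ ε * (2 * ‖gradient ℓ (x₀ + δ) - gradient ℓ x₀‖ / ‖gradient ℓ x₀‖) := by
        gcongr
        exact NormedSpace.norm_normalize_sub_normalize_le hg0
    _ ≤ ε * (2 * (L * ‖δ‖) / ‖gradient ℓ x₀‖) := by
        gcongr
        simpa using hLip (x₀ + δ) x₀
    _ = (2 * ε * L / ‖gradient ℓ x₀‖) * ‖δ‖ := by ring

/-- If `ℓ` is differentiable with `L`-Lipschitz gradient and
`∇ℓ(x₀) ≠ 0`, then the normalized-gradient map
`F(δ) = ε • ∇ℓ(x₀ + δ)/‖∇ℓ(x₀ + δ)‖₂` satisfies, for every `δ` with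
`∇ℓ(x₀ + δ) ≠ 0`, the Lipschitz-type bound
`‖F(δ) − F(0)‖₂ ≤ (2εL/‖∇ℓ(x₀)‖₂)·‖δ‖₂`. -/
theorem l2_fixed_point_map_lipschitz {d : ℕ}
    (ℓ : EuclideanSpace ℝ (Fin d) → ℝ) (hdiff : Differentiable ℝ ℓ)
    (L : ℝ) (hL : 0 ≤ L)
    (hLip : ∀ x y : EuclideanSpace ℝ (Fin d),
      ‖gradient ℓ x - gradient ℓ y‖ ≤ L * ‖x - y‖)
    (x₀ : EuclideanSpace ℝ (Fin d)) (hg0 : gradient ℓ x₀ ≠ 0)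
    (ε : ℝ) (hε : 0 < ε)
    (F : EuclideanSpace ℝ (Fin d) → EuclideanSpace ℝ (Fin d))
    (hF : ∀ δ, F δ = (ε / ‖gradient ℓ (x₀ + δ)‖) • gradient ℓ (x₀ + δ)) :
    ∀ δ : EuclideanSpace ℝ (Fin d), gradient ℓ (x₀ + δ) ≠ 0 →
      ‖F δ - F 0‖ ≤ (2 * ε * L / ‖gradient ℓ x₀‖) * ‖δ‖ :=
  l2_fixed_point_map_lipschitz_general ℓ L hLip x₀ hg0 ε hε F hF
end

section
/- Let q ∈ (1,2), ε > 0, m > 0, and let g : ℝ^d → ℝ^d satisfy: (i) ‖g(x₀+δ) − g(x₀)‖_q ≤ L‖δ‖_q for all δ; (ii) g(x₀) ≠ 0; (iii) for the given perturbation δ, every component of the normalized vectors f(δ) := g(x₀+δ)/‖g(x₀+δ)‖_q and f(0) := g(x₀)/‖g(x₀)‖_q has absolute value at least m/‖g(x₀)‖_q and, componentwise, |f(δ)_i| ≥ m' and |f(0)_i| ≥ m' for some m' > 0. Define F_p(δ) componentwise by F_p(δ)_i = ε · sign(g(x₀+δ)_i) · |f(δ)_i|^{q−1}. Then ‖F_p(δ)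 − F_p(0)‖_q ≤ ε · ((2−q)·(m')^{q−3} + (m')^{q−2}) · (2L/‖g(x₀)‖_q) · ‖δ‖_q. -/
/-!
Write `u = g (x₀ + δ)` and `v = g x₀`. Normalisation `u ↦ u / ‖u‖` moves `u` by at most
`2‖u - v‖ / ‖v‖` relative to `v` in any normed space, so `‖f δ - f 0‖_q ≤ 2L‖δ‖_q / ‖v‖_q`.
Since `f` is a positive multiple of `g`, the signs in `F_p` are those of `f`, and
`sign t · |t|^(q-1) = t · |t|^(q-2)`. Splitting
`s|s|^(q-2) - t|t|^(q-2) = (s - t)|s|^(q-2) + t(|s|^(q-2) - |t|^(q-2))` and using the mean value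
theorem for `x ↦ x^(q-2)` on `[m', ∞)`, together with `|f 0 i| ≤ 1`, bounds each component of
`F_p δ - F_p 0` by `ε((2-q)m'^(q-3) + m'^(q-2))` times that of `f δ - f 0`; the `ℓ^q` norm is
monotone in the absolute values of the components.
-/

/-- The `ℓ^q` norm `(∑ i, |x i| ^ q) ^ (1/q)` on `Fin d → ℝ` for a real exponent `q`. -/
noncomputable def lpNorm {d : ℕ} (q : ℝ) (x : Fin d → ℝ) : ℝ :=
  (∑ i, |x i| ^ q) ^ (1 / q)

open NormedSpace in
theorem norm_normalize_sub_normalize_le {V : Type*} [NormedAddCommGroup V] [NormedSpace ℝ V]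
    (u : V) {v : V} (hv : v ≠ 0) : ‖normalize u - normalize v‖ ≤ 2 * ‖u - v‖ / ‖v‖ := by
  have hv' : 0 < ‖v‖ := norm_pos_iff.2 hv
  rcases eq_or_ne u 0 with rfl | hu
  · rw [normalize_zero_eq_zero, zero_sub, norm_neg, norm_normalize hv, zero_sub, norm_neg,
      mul_div_assoc, div_self hv'.ne']
    norm_num
  have hu' : 0 < ‖u‖ := norm_pos_iff.2 hu
  have split : normalize u - normalize v = (‖u‖⁻¹ - ‖v‖⁻¹) • u + ‖v‖⁻¹ • (u - v) := by
    simp only [NormedSpace.normalize]; module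
  have radial : ‖(‖u‖⁻¹ - ‖v‖⁻¹) • u‖ ≤ ‖u - v‖ / ‖v‖ := by
    calc ‖(‖u‖⁻¹ - ‖v‖⁻¹) • u‖ = |‖v‖ - ‖u‖| / ‖v‖ := by
          rw [norm_smul, Real.norm_eq_abs, inv_sub_inv hu'.ne' hv'.ne', abs_div,
            abs_of_pos (mul_pos hu' hv')]
          field_simp
      _ ≤ ‖u - v‖ / ‖v‖ := by
          gcongr
          rw [abs_sub_comm]
          exact abs_norm_sub_norm_le u v
  calc ‖normalize u - normalize v‖ ≤ ‖(‖u‖⁻¹ - ‖v‖⁻¹) • u‖ + ‖‖v‖⁻¹ • (u - v)‖ :=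
        split ▸ norm_add_le _ _
    _ ≤ ‖u - v‖ / ‖v‖ + ‖u - v‖ / ‖v‖ := by
        gcongr
        rw [norm_smul, norm_inv, norm_norm, inv_mul_eq_div]
    _ = 2 * ‖u - v‖ / ‖v‖ := by ring

theorem Real.sign_mul_of_pos {c : ℝ} (hc : 0 < c) (x : ℝ) : Real.sign (c * x) = Real.sign x := by
  rcases lt_trichotomy x 0 with h | rfl | h
  · rw [Real.sign_of_neg h, Real.sign_of_neg (mul_neg_of_pos_of_neg hc h)]
  · rw [mul_zero]
  · rw [Real.sign_of_pos h, Real.sign_of_pos (mul_pos hc h)]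

theorem Real.sign_mul_abs_rpow_add_one (u r : ℝ) :
    Real.sign u * |u| ^ (r + 1) = u * |u| ^ r := by
  rcases lt_trichotomy u 0 with h | rfl | h
  · rw [Real.sign_of_neg h, Real.rpow_add_one (abs_pos.2 h.ne).ne', abs_of_neg h]; ring
  · simp
  · rw [Real.sign_of_pos h, Real.rpow_add_one (abs_pos.2 h.ne').ne', abs_of_pos h]; ring

section lpNorm

variable {d : ℕ} {q : ℝ}

theorem lpNorm_eq_norm_toLp (hq : 0 < q) (x : Fin d → ℝ) :
    lpNorm q x = ‖WithLp.toLp (ENNReal.ofReal q) x‖ := by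
  rw [PiLp.norm_eq_sum (by rwa [ENNReal.toReal_ofReal hq.le]), ENNReal.toReal_ofReal hq.le]
  simp [lpNorm, Real.norm_eq_abs]

theorem abs_apply_le_lpNorm (hq : 0 < q) (x : Fin d → ℝ) (i : Fin d) : |x i| ≤ lpNorm q x := by
  calc |x i| = (|x i| ^ q) ^ (1 / q) := by
        rw [← Real.rpow_mul (abs_nonneg _), mul_one_div_cancel hq.ne', Real.rpow_one]
    _ ≤ lpNorm q x := by
        refine Real.rpow_le_rpow (by positivity) ?_ (by positivity)
        exact Finset.single_le_sum (f := fun j => |x j| ^ q) (fun j _ => by positivity)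
          (Finset.mem_univ i)

theorem lpNorm_pos (hq : 0 < q) {x : Fin d → ℝ} (hx : x ≠ 0) : 0 < lpNorm q x := by
  obtain ⟨i, hi⟩ := Function.ne_iff.mp hx
  exact (abs_pos.2 hi).trans_le (abs_apply_le_lpNorm hq x i)

theorem lpNorm_smul (hq : 0 < q) (c : ℝ) (x : Fin d → ℝ) :
    lpNorm q (c • x) = |c| * lpNorm q x := by
  have hc : ∀ i, |(c • x) i| ^ q = |c| ^ q * |x i| ^ q := fun i => by
    rw [Pi.smul_apply, smul_eq_mul, abs_mul, Real.mul_rpow (abs_nonneg _) (abs_nonneg _)]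
  rw [lpNorm, lpNorm, Finset.sum_congr rfl fun i _ => hc i, ← Finset.mul_sum,
    Real.mul_rpow (by positivity) (by positivity), ← Real.rpow_mul (abs_nonneg c),
    mul_one_div_cancel hq.ne', Real.rpow_one]

theorem lpNorm_le_mul_of_abs_le (hq : 0 < q) {c : ℝ} (hc : 0 ≤ c) {x y : Fin d → ℝ}
    (h : ∀ i, |x i| ≤ c * |y i|) : lpNorm q x ≤ c * lpNorm q y := by
  have habs : ∀ i, |(c • y) i| = c * |y i| := fun i => by
    rw [Pi.smul_apply, smul_eq_mul, abs_mul, abs_of_nonneg hc]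
  rw [← abs_of_nonneg hc, ← lpNorm_smul hq]
  refine Real.rpow_le_rpow (by positivity) (Finset.sum_le_sum fun i _ => ?_) (by positivity)
  exact Real.rpow_le_rpow (abs_nonneg _) (habs i ▸ h i) hq.le

theorem lpNorm_inv_smul_self (hq : 0 < q) {x : Fin d → ℝ} (hx : x ≠ 0) :
    lpNorm q ((lpNorm q x)⁻¹ • x) = 1 := by
  have hx' := lpNorm_pos hq hx
  rw [lpNorm_smul hq, abs_of_pos (inv_pos.2 hx'), inv_mul_cancel₀ hx'.ne']

theorem sign_inv_lpNorm_smul_apply (hq : 0 < q) (x : Fin d → ℝ) (i : Fin d) :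
    Real.sign (((lpNorm q x)⁻¹ • x) i) = Real.sign (x i) := by
  rcases eq_or_ne x 0 with rfl | hx
  · simp
  · exact Real.sign_mul_of_pos (inv_pos.2 (lpNorm_pos hq hx)) (x i)

theorem lpNorm_inv_smul_sub_inv_smul_le (hq : 1 ≤ q) (x : Fin d → ℝ) {y : Fin d → ℝ}
    (hy : y ≠ 0) :
    lpNorm q ((lpNorm q x)⁻¹ • x - (lpNorm q y)⁻¹ • y) ≤ 2 * lpNorm q (x - y) / lpNorm q y := by
  have : Fact (1 ≤ ENNReal.ofReal q) := ⟨by simpa using hq⟩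
  simp only [lpNorm_eq_norm_toLp (zero_lt_one.trans_le hq), WithLp.toLp_sub, WithLp.toLp_smul]
  exact norm_normalize_sub_normalize_le _ (by simpa using hy)

end lpNorm

theorem abs_rpow_sub_rpow_le_of_nonpos {r m' a b : ℝ} (hr : r ≤ 0) (hm' : 0 < m')
    (ha : m' ≤ a) (hb : m' ≤ b) : |a ^ r - b ^ r| ≤ -r * m' ^ (r - 1) * |a - b| := by
  have hderiv : ∀ x ∈ Set.Ici m',
      HasDerivWithinAt (fun t : ℝ => t ^ r) (r * x ^ (r - 1)) (Set.Ici m') x := fun x hx =>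
    (Real.hasDerivAt_rpow_const (Or.inl (hm'.trans_le hx).ne')).hasDerivWithinAt
  have hbound : ∀ x ∈ Set.Ici m', ‖r * x ^ (r - 1)‖ ≤ -r * m' ^ (r - 1) := by
    intro x hx
    rw [Real.norm_eq_abs, abs_mul, abs_of_nonpos hr,
      abs_of_nonneg (Real.rpow_nonneg (hm'.trans_le hx).le _)]
    exact mul_le_mul_of_nonneg_left (Real.rpow_le_rpow_of_nonpos hm' hx (by linarith))
      (neg_nonneg.2 hr)
  simpa [Real.norm_eq_abs] using
    (convex_Ici m').norm_image_sub_le_of_norm_hasDerivWithin_le hderiv hbound hb ha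

theorem abs_mul_abs_rpow_sub_le {r m' s t : ℝ} (hr : r ≤ 0) (hm' : 0 < m')
    (hs : m' ≤ |s|) (ht : m' ≤ |t|) (ht1 : |t| ≤ 1) :
    |s * |s| ^ r - t * |t| ^ r| ≤ (-r * m' ^ (r - 1) + m' ^ r) * |s - t| := by
  have hscale : |(s - t) * |s| ^ r| ≤ m' ^ r * |s - t| := by
    rw [abs_mul, abs_of_nonneg (Real.rpow_nonneg (abs_nonneg s) r), mul_comm]
    exact mul_le_mul_of_nonneg_right (Real.rpow_le_rpow_of_nonpos hm' hs hr) (abs_nonneg _)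
  have hradial : |t * (|s| ^ r - |t| ^ r)| ≤ -r * m' ^ (r - 1) * |s - t| := by
    rw [abs_mul]
    calc |t| * |(|s| ^ r - |t| ^ r)| ≤ |(|s| ^ r - |t| ^ r)| :=
          mul_le_of_le_one_left (abs_nonneg _) ht1
      _ ≤ -r * m' ^ (r - 1) * |(|s| - |t|)| := abs_rpow_sub_rpow_le_of_nonpos hr hm' hs ht
      _ ≤ -r * m' ^ (r - 1) * |s - t| :=
          mul_le_mul_of_nonneg_left (abs_abs_sub_abs_le_abs_sub s t)
            (mul_nonneg (neg_nonneg.2 hr) (by positivity))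
  calc |s * |s| ^ r - t * |t| ^ r| = |(s - t) * |s| ^ r + t * (|s| ^ r - |t| ^ r)| := by
        congr 1; ring
    _ ≤ |(s - t) * |s| ^ r| + |t * (|s| ^ r - |t| ^ r)| := abs_add_le _ _
    _ ≤ (-r * m' ^ (r - 1) + m' ^ r) * |s - t| := by linarith

theorem abs_sign_mul_abs_rpow_sub_le {q m' s t : ℝ} (hq : q ≤ 2) (hm' : 0 < m')
    (hs : m' ≤ |s|) (ht : m' ≤ |t|) (ht1 : |t| ≤ 1) :
    |Real.sign s * |s| ^ (q - 1) - Real.sign t * |t| ^ (q - 1)| ≤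
      ((2 - q) * m' ^ (q - 3) + m' ^ (q - 2)) * |s - t| := by
  have h := abs_mul_abs_rpow_sub_le (r := q - 2) (by linarith) hm' hs ht ht1
  rw [neg_sub, show q - 2 - 1 = q - 3 by ring] at h
  rwa [show q - 1 = q - 2 + 1 by ring, Real.sign_mul_abs_rpow_add_one,
    Real.sign_mul_abs_rpow_add_one]

theorem lp_fixed_point_map_lipschitz_general {d : ℕ} (q ε m' L : ℝ)
    (hq1 : 1 < q) (hq2 : q < 2) (hε : 0 < ε) (hm' : 0 < m')
    (g : (Fin d → ℝ) → (Fin d → ℝ)) (x₀ δ : Fin d → ℝ)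
    (hLip : ∀ δ' : Fin d → ℝ, lpNorm q (g (x₀ + δ') - g x₀) ≤ L * lpNorm q δ')
    (hg0 : g x₀ ≠ 0)
    (f : (Fin d → ℝ) → (Fin d → ℝ))
    (hf : ∀ δ', f δ' = (lpNorm q (g (x₀ + δ')))⁻¹ • g (x₀ + δ'))
    (hcomp_m' : ∀ i, m' ≤ |f δ i| ∧ m' ≤ |f 0 i|)
    (Fp : (Fin d → ℝ) → (Fin d → ℝ))
    (hFp : ∀ δ' i, Fp δ' i = ε * Real.sign (g (x₀ + δ') i) * |f δ' i| ^ (q - 1)) :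
    lpNorm q (Fp δ - Fp 0) ≤
      ε * ((2 - q) * m' ^ (q - 3) + m' ^ (q - 2)) * (2 * L / lpNorm q (g x₀)) *
        lpNorm q δ := by
  have hq0 : 0 < q := by linarith
  set C := (2 - q) * m' ^ (q - 3) + m' ^ (q - 2)
  have h2q : 0 ≤ 2 - q := by linarith
  have hεC : 0 ≤ ε * C := by positivity
  have hf0 : f 0 = (lpNorm q (g x₀))⁻¹ • g x₀ := by simpa using hf 0
  have hf0_le_one (i : Fin d) : |f 0 i| ≤ 1 :=
    lpNorm_inv_smul_self hq0 hg0 ▸ hf0 ▸ abs_apply_le_lpNorm hq0 (f 0) i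
  have hFp' (δ' : Fin d → ℝ) (i : Fin d) :
      Fp δ' i = ε * (Real.sign (f δ' i) * |f δ' i| ^ (q - 1)) := by
    rw [hFp, hf, sign_inv_lpNorm_smul_apply hq0, mul_assoc]
  have hcomp (i : Fin d) : |(Fp δ - Fp 0) i| ≤ ε * C * |(f δ - f 0) i| := by
    rw [Pi.sub_apply, Pi.sub_apply, hFp', hFp', ← mul_sub, abs_mul, abs_of_pos hε, mul_assoc]
    exact mul_le_mul_of_nonneg_left
      (abs_sign_mul_abs_rpow_sub_le hq2.le hm' (hcomp_m' i).1 (hcomp_m' i).2 (hf0_le_one i)) hε.le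
  have hnormalized :
      lpNorm q (f δ - f 0) ≤ 2 * lpNorm q (g (x₀ + δ) - g x₀) / lpNorm q (g x₀) := by
    rw [hf δ, hf0]
    exact lpNorm_inv_smul_sub_inv_smul_le hq1.le _ hg0
  calc lpNorm q (Fp δ - Fp 0) ≤ ε * C * lpNorm q (f δ - f 0) :=
        lpNorm_le_mul_of_abs_le hq0 hεC hcomp
    _ ≤ ε * C * (2 * (L * lpNorm q δ) / lpNorm q (g x₀)) := by
        gcongr
        exact hnormalized.trans (div_le_div_of_nonneg_right
          (mul_le_mul_of_nonneg_left (hLip δ) zero_le_two) (lpNorm_pos hq0 hg0).le)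
    _ = ε * C * (2 * L / lpNorm q (g x₀)) * lpNorm q δ := by ring

/-- Local Lipschitz bound for the single-step `ℓ^p` attack map
`F_p(δ)_i = ε · sign(g(x₀+δ)_i) · |f(δ)_i|^(q−1)`, where
`f(δ) = g(x₀+δ)/‖g(x₀+δ)‖_q`, under (i) an `ℓ^q`-Lipschitz bound on `g`,
(ii) `g(x₀) ≠ 0`, and (iii) componentwise lower bounds `m/‖g(x₀)‖_q` and `m' > 0`
on the magnitudes of the components of `f(δ)` and `f(0)`:
`‖F_p(δ) − F_p(0)‖_q ≤ ε·((2−q)(m')^(q−3) + (m')^(q−2))·(2L/‖g(x₀)‖_q)·‖δ‖_q`. -/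
theorem lp_fixed_point_map_lipschitz {d : ℕ} (q ε m m' L : ℝ)
    (hq1 : 1 < q) (hq2 : q < 2) (hε : 0 < ε) (hm : 0 < m) (hm' : 0 < m') (hL : 0 ≤ L)
    (g : (Fin d → ℝ) → (Fin d → ℝ)) (x₀ δ : Fin d → ℝ)
    (hLip : ∀ δ' : Fin d → ℝ, lpNorm q (g (x₀ + δ') - g x₀) ≤ L * lpNorm q δ')
    (hg0 : g x₀ ≠ 0)
    (f : (Fin d → ℝ) → (Fin d → ℝ))
    (hf : ∀ δ', f δ' = (lpNorm q (g (x₀ + δ')))⁻¹ • g (x₀ + δ'))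
    (hcomp_m : ∀ i, m / lpNorm q (g x₀) ≤ |f δ i| ∧ m / lpNorm q (g x₀) ≤ |f 0 i|)
    (hcomp_m' : ∀ i, m' ≤ |f δ i| ∧ m' ≤ |f 0 i|)
    (Fp : (Fin d → ℝ) → (Fin d → ℝ))
    (hFp : ∀ δ' i, Fp δ' i = ε * Real.sign (g (x₀ + δ') i) * |f δ' i| ^ (q - 1)) :
    lpNorm q (Fp δ - Fp 0) ≤
      ε * ((2 - q) * m' ^ (q - 3) + m' ^ (q - 2)) * (2 * L / lpNorm q (g x₀)) *
        lpNorm q δ :=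
  lp_fixed_point_map_lipschitz_general q ε m' L hq1 hq2 hε hm' g x₀ δ hLip hg0 f hf hcomp_m' Fp hFp
end

section
/- Let g ∈ ℝ^d be nonzero, let p ≥ 3 be real, and let q = p/(p−1) ∈ (1, 3/2]. Then (Σ_i |g_i|^q) / ( ‖g‖₂ · (Σ_i |g_i|^{2(q−1)})^{1/2} ) ≥ ‖g‖₁ / ( √d · ‖g‖₂ ), i.e. the cosine similarity between the ℓ² and ℓ^p single-step attack directions is at least the cosine similarity between the ℓ² and ℓ^∞ (sign) attack directions. -/
/-!
Write `a i = |g i|` and `r = q - 1 = 1/(p - 1) ∈ [0, 1]`. After clearing denominators the claim becomes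
`(∑ a)² · ∑ a^(2r) ≤ d · (∑ a^(1+r))²`. Cauchy–Schwarz with `a = a^((1+r)/2) · a^((1-r)/2)` gives
`(∑ a)² ≤ ∑ a^(1+r) · ∑ a^(1-r)`, and Chebyshev's sum inequality for the similarly ordered
families `a^(1-r)` and `a^(2r)` gives `∑ a^(1-r) · ∑ a^(2r) ≤ d · ∑ a^(1+r)`.
-/

open Finset

section RpowSums

variable {ι : Type*} [Fintype ι] {a : ι → ℝ}

theorem sq_sum_le_sum_rpow_mul_sum_rpow (ha : ∀ i, 0 ≤ a i) (r : ℝ) :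
    (∑ i, a i) ^ 2 ≤ (∑ i, a i ^ (1 + r)) * ∑ i, a i ^ (1 - r) := by
  refine sum_sq_le_sum_mul_sum_of_sq_le_mul _ (fun i _ => Real.rpow_nonneg (ha i) _)
    (fun i _ => Real.rpow_nonneg (ha i) _) fun i _ => le_of_eq ?_
  rw [← Real.rpow_add' (ha i) (by norm_num), add_add_sub_cancel, ← Real.rpow_natCast]
  norm_num

theorem sum_rpow_mul_sum_rpow_le_card_mul_sum_rpow (ha : ∀ i, 0 ≤ a i) {α β : ℝ}
    (hα : 0 ≤ α) (hβ : 0 ≤ β) :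
    (∑ i, a i ^ α) * ∑ i, a i ^ β ≤ Fintype.card ι * ∑ i, a i ^ (α + β) := by
  have hmono : Monovary (fun i => a i ^ α) (fun i => a i ^ β) := fun i j hij =>
    Real.rpow_le_rpow (ha i)
      (lt_of_not_ge fun hji => (Real.rpow_le_rpow (ha j) hji hβ).not_gt hij).le hα
  simpa only [← Real.rpow_add_of_nonneg (ha _) hα hβ] using hmono.sum_mul_sum_le_card_mul_sum

theorem sum_mul_sqrt_sum_rpow_le_sqrt_card_mul_sum_rpow (ha : ∀ i, 0 ≤ a i) {r : ℝ}
    (hr₀ : 0 ≤ r) (hr₁ : r ≤ 1) :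
    (∑ i, a i) * √(∑ i, a i ^ (2 * r)) ≤ √(Fintype.card ι) * ∑ i, a i ^ (1 + r) := by
  have hsum_nonneg : ∀ s : ℝ, 0 ≤ ∑ i, a i ^ s := fun s =>
    sum_nonneg fun i _ => Real.rpow_nonneg (ha i) s
  have hsquared : (∑ i, a i) ^ 2 * ∑ i, a i ^ (2 * r) ≤
      Fintype.card ι * (∑ i, a i ^ (1 + r)) ^ 2 := by
    have hcheb := sum_rpow_mul_sum_rpow_le_card_mul_sum_rpow ha (sub_nonneg.2 hr₁)
      (by positivity : (0 : ℝ) ≤ 2 * r)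
    rw [show 1 - r + 2 * r = 1 + r by ring] at hcheb
    calc (∑ i, a i) ^ 2 * ∑ i, a i ^ (2 * r)
        ≤ (∑ i, a i ^ (1 + r)) * (∑ i, a i ^ (1 - r)) * ∑ i, a i ^ (2 * r) :=
          mul_le_mul_of_nonneg_right (sq_sum_le_sum_rpow_mul_sum_rpow ha r) (hsum_nonneg _)
      _ ≤ (∑ i, a i ^ (1 + r)) * (Fintype.card ι * ∑ i, a i ^ (1 + r)) := by
          rw [mul_assoc]; exact mul_le_mul_of_nonneg_left hcheb (hsum_nonneg _)
      _ = Fintype.card ι * (∑ i, a i ^ (1 + r)) ^ 2 := by ring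
  rw [← pow_le_pow_iff_left₀ (mul_nonneg (sum_nonneg fun i _ => ha i) (Real.sqrt_nonneg _))
    (mul_nonneg (Real.sqrt_nonneg _) (hsum_nonneg _)) two_ne_zero, mul_pow, mul_pow,
    Real.sq_sqrt (hsum_nonneg _), Real.sq_sqrt (Nat.cast_nonneg _)]
  exact hsquared

end RpowSums

/-- Monotonicity of Angular Separation: for nonzero `g ∈ ℝ^d`,
real `p ≥ 3` and `q = p/(p−1)`, the cosine similarity between the `ℓ²` and `ℓ^p`
single-step attack directions,
`cos(θ_{2,p}) = (∑ |g_i|^q) / (‖g‖₂ · (∑ |g_i|^(2(q−1)))^(1/2))`,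
is at least the cosine similarity between the `ℓ²` and `ℓ^∞` (sign) directions,
`cos(θ_{2,∞}) = ‖g‖₁/(√d · ‖g‖₂)`. -/
theorem angular_separation_monotone {d : ℕ} (g : Fin d → ℝ) (hg : g ≠ 0)
    (p q : ℝ) (hp : 3 ≤ p) (hq : q = p / (p - 1)) :
    (∑ i, |g i|) / (Real.sqrt (d : ℝ) * Real.sqrt (∑ i, g i ^ 2)) ≤
      (∑ i, |g i| ^ q) /
        (Real.sqrt (∑ i, g i ^ 2) * Real.sqrt (∑ i, |g i| ^ (2 * (q - 1)))) := by
  have hq_sub : q - 1 = 1 / (p - 1) := by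
    rw [hq]; field_simp [show p - 1 ≠ 0 by linarith]; ring
  have hr₀ : 0 ≤ q - 1 := by rw [hq_sub]; exact (one_div_pos.2 (by linarith)).le
  have hr₁ : q - 1 ≤ 1 := by rw [hq_sub, div_le_one (by linarith)]; linarith
  have hkey := sum_mul_sqrt_sum_rpow_le_sqrt_card_mul_sum_rpow (fun i => abs_nonneg (g i)) hr₀ hr₁
  rw [Fintype.card_fin, add_sub_cancel] at hkey
  obtain ⟨i₀, hi₀⟩ := Function.ne_iff.1 hg
  have hd : (0 : ℝ) < d := Nat.cast_pos.2 (Fin.pos i₀)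
  have hnorm : 0 < ∑ i, g i ^ 2 :=
    sum_pos' (fun i _ => sq_nonneg _) ⟨i₀, mem_univ _, sq_pos_of_ne_zero hi₀⟩
  have hweight : 0 < ∑ i, |g i| ^ (2 * (q - 1)) :=
    sum_pos' (fun i _ => Real.rpow_nonneg (abs_nonneg _) _)
      ⟨i₀, mem_univ _, Real.rpow_pos_of_pos (abs_pos.2 hi₀) _⟩
  rw [div_le_div_iff₀ (mul_pos (Real.sqrt_pos.2 hd) (Real.sqrt_pos.2 hnorm))
    (mul_pos (Real.sqrt_pos.2 hnorm) (Real.sqrt_pos.2 hweight))]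
  have := mul_le_mul_of_nonneg_right hkey (Real.sqrt_nonneg (∑ i, g i ^ 2))
  linarith
end

section
/- Let g ∈ ℝ^d be a vector all of whose components are nonzero, and define φ : (1, 2) → ℝ by φ(q) = (Σ_i |g_i|^q) / ( ‖g‖₂ · (Σ_i |g_i|^{2(q−1)})^{1/2} ), extended to q = 1 by φ(1) = ‖g‖₁/(√d · ‖g‖₂). Let ρ_i = |g_i|/‖g‖₁, H = −Σ_i ρ_i log ρ_i, and H_m = −(1/d) Σ_i log ρ_i. Then φ is differentiable at q = 1 with derivative φ'(1) = (‖g‖₁/(√d · ‖g‖₂)) · (H_m − H); equivalently, φ(q) = √(PR₁(g)/d) · (1 + (q−1)(H_m − H)) + O((q−1)²) as q → 1⁺, where PR₁(g) = (‖g‖₁/‖g‖₂)². -/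
/-!
Write `a i = |g i|`, `S = ∑ a i` and `n = d`. Then `φ q = N q / (‖g‖₂ · √(D q))` with
`N q = ∑ a i ^ q` and `D q = ∑ a i ^ (2 (q - 1))`, so `N 1 = S`, `D 1 = n`,
`N' 1 = ∑ a i log a i` and `D' 1 = 2 ∑ log a i`, and the quotient rule gives
`φ' 1 = S / (√n ‖g‖₂) · ((∑ a i log a i) / S - (∑ log a i) / n)`.
Since `log ρ i = log a i - log S`, the `log S` terms cancel in `H_m - H`, which is exactly
the bracket.
-/

open Finset Real

section EntropyGap

variable {ι : Type*} [Fintype ι] {a : ι → ℝ}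

theorem neg_sum_div_sum_mul_log_div_sum (ha : ∀ i, 0 < a i) :
    -∑ i, a i / (∑ j, a j) * log (a i / ∑ j, a j)
      = log (∑ j, a j) - (∑ i, a i * log (a i)) / ∑ j, a j := by
  rcases isEmpty_or_nonempty ι with hι | hι
  · simp
  have hS : 0 < ∑ j, a j := sum_pos (fun i _ => ha i) univ_nonempty
  have hlog : ∀ i, log (a i / ∑ j, a j) = log (a i) - log (∑ j, a j) := fun i =>
    log_div (ha i).ne' hS.ne'
  simp only [hlog, mul_sub, sum_sub_distrib, ← sum_mul, div_mul_eq_mul_div, ← sum_div]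
  field_simp
  ring

theorem neg_mean_log_div_sum (ha : ∀ i, 0 < a i) :
    -(1 / (Fintype.card ι : ℝ)) * ∑ i, log (a i / ∑ j, a j)
      = log (∑ j, a j) - (∑ i, log (a i)) / Fintype.card ι := by
  rcases isEmpty_or_nonempty ι with hι | hι
  · simp
  have hS : 0 < ∑ j, a j := sum_pos (fun i _ => ha i) univ_nonempty
  have hn : (Fintype.card ι : ℝ) ≠ 0 := Nat.cast_ne_zero.2 Fintype.card_ne_zero
  simp only [fun i => log_div (ha i).ne' hS.ne', sum_sub_distrib, sum_const, card_univ,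
    nsmul_eq_mul]
  field_simp
  ring

end EntropyGap

theorem hasDerivAt_sum_rpow_div_sqrt_sum_rpow {ι : Type*} [Fintype ι] [Nonempty ι]
    {a : ι → ℝ} (ha : ∀ i, 0 < a i) :
    HasDerivAt (fun q : ℝ => (∑ i, a i ^ q) / √(∑ i, a i ^ (2 * (q - 1))))
      ((∑ i, a i) / √(Fintype.card ι : ℝ) *
        ((∑ i, a i * log (a i)) / (∑ i, a i) - (∑ i, log (a i)) / Fintype.card ι)) 1 := by
  set n : ℝ := (Fintype.card ι : ℝ)
  have hn : 0 < n := Nat.cast_pos.2 Fintype.card_pos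
  have hS : 0 < ∑ i, a i := sum_pos (fun i _ => ha i) univ_nonempty
  have hN : HasDerivAt (fun q : ℝ => ∑ i, a i ^ q) (∑ i, a i * log (a i)) 1 :=
    (HasDerivAt.fun_sum fun i _ => (hasDerivAt_id' (1 : ℝ)).const_rpow (ha i)).congr_deriv
      (by simp [mul_comm])
  have hD : HasDerivAt (fun q : ℝ => ∑ i, a i ^ (2 * (q - 1))) (2 * ∑ i, log (a i)) 1 := by
    have hexp : HasDerivAt (fun q : ℝ => 2 * (q - 1)) 2 1 := by
      simpa using ((hasDerivAt_id' (1 : ℝ)).sub_const 1).const_mul 2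
    exact (HasDerivAt.fun_sum fun i _ => hexp.const_rpow (ha i)).congr_deriv
      (by simp [mul_sum, mul_comm])
  have hD1 : ∑ i, a i ^ (2 * ((1 : ℝ) - 1)) = n := by simp [n]
  refine (hN.fun_div (hD.sqrt (hD1 ▸ hn.ne')) (by rw [hD1]; positivity)).congr_deriv ?_
  simp only [hD1, rpow_one]
  field_simp
  rw [sq_sqrt hn.le]
  ring

/-- for `g ∈ ℝ^d` with all components nonzero, the cosine similarity
`φ(q) = (∑ |g_i|^q) / (‖g‖₂ · (∑ |g_i|^(2(q−1)))^(1/2))` between the `ℓ²` and `ℓ^p`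
attack directions (with `q = p/(p−1)`), whose value at `q = 1` is `‖g‖₁/(√d·‖g‖₂)`,
is differentiable at `q = 1` with derivative
`φ'(1) = (‖g‖₁/(√d·‖g‖₂))·(H_m − H) = √(PR₁(g)/d)·(H_m − H)`,
where `ρ_i = |g_i|/‖g‖₁`, `H = −∑ ρ_i log ρ_i` and `H_m = −(1/d)∑ log ρ_i`. -/
theorem cos_similarity_taylor_entropy_gap {d : ℕ} (g : Fin d → ℝ)
    (hg : ∀ i, g i ≠ 0)
    (φ : ℝ → ℝ)
    (hφ : ∀ q : ℝ, φ q = (∑ i, |g i| ^ q) /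
        (Real.sqrt (∑ i, g i ^ 2) * Real.sqrt (∑ i, |g i| ^ (2 * (q - 1)))))
    (ρ : Fin d → ℝ) (hρ : ∀ i, ρ i = |g i| / ∑ j, |g j|)
    (H Hm : ℝ)
    (hH : H = -∑ i, ρ i * Real.log (ρ i))
    (hHm : Hm = -(1 / (d : ℝ)) * ∑ i, Real.log (ρ i)) :
    HasDerivAt φ
      (((∑ i, |g i|) / (Real.sqrt (d : ℝ) * Real.sqrt (∑ i, g i ^ 2))) * (Hm - H))
      1 := by
  obtain rfl : φ = _ := funext hφ
  obtain rfl : ρ = fun i => |g i| / ∑ j, |g j| := funext hρ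
  subst hH hHm
  rcases isEmpty_or_nonempty (Fin d) with hd | hd
  · simpa using hasDerivAt_const (1 : ℝ) (0 : ℝ)
  have habs : ∀ i, 0 < |g i| := fun i => abs_pos.2 (hg i)
  have hcard : (Fintype.card (Fin d) : ℝ) = d := by simp
  simp_rw [div_mul_eq_div_div_swap]
  refine ((hasDerivAt_sum_rpow_div_sqrt_sum_rpow habs).div_const _).congr_deriv ?_
  rw [← hcard, neg_mean_log_div_sum habs, neg_sum_div_sum_mul_log_div_sum habs]
  ring
end
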